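/- The explicit piecewise linear density f is long-tailed: f(x) > 0 for all x ≥ 0 and, for each constant t ∈ ℝ, f(x+t)/f(x) → 1 as x → ∞; that is, f ∈ 𝓛₀. -/

import Mathlib

open MeasureTheory Filter Set

noncomputable section

/-- `a_n = 2^(n²)`. -/
def aSeq (n : ℕ) : ℝ := 2 ^ (n ^ 2)

/-- `m_n` : the least positive integer `k` with `k ≥ (√5/√6)·n`. -/
def mIdx (n : ℕ) : ℕ := max 1 ⌈(Real.sqrt 5 / Real.sqrt 6) * (n : ℝ)⌉₊

/-- `b_n = a_n + a_{m_n}·(ln (n+1))²`. -/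
def bSeq (n : ℕ) : ℝ := aSeq n + aSeq (mIdx n) * (Real.log ((n : ℝ) + 1)) ^ 2

/-- `c_n = (a_{n+1} + b_n)/2`. -/
def cSeq (n : ℕ) : ℝ := (aSeq (n + 1) + bSeq n) / 2

/-- `f` is affine (the linear interpolation of its endpoint values) on `[p, q]`. -/
def AffineOnIcc (f : ℝ → ℝ) (p q : ℝ) : Prop :=
  ∀ x ∈ Set.Icc p q, f x = f p + (x - p) / (q - p) * (f q - f p)

/-- The explicit continuous piecewise linear construction `f₀ : [0,∞) → (0,∞)`
with `f₀(0) = 1`, `f₀(a_n) = 2 a_n⁻³`, `f₀(b_n) = 2 a_n⁻³ / ln(n+1)`,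
`f₀(c_n) = 2 a_n⁻³`, affine on `[0,a₁]`, `[a_n,b_n]`, `[b_n,c_n]`, `[c_n,a_{n+1}]`. -/
def PWConstruction (f₀ : ℝ → ℝ) : Prop :=
  ContinuousOn f₀ (Set.Ici 0) ∧
  (∀ x : ℝ, 0 ≤ x → 0 < f₀ x) ∧
  f₀ 0 = 1 ∧
  (∀ n : ℕ, 1 ≤ n →
    f₀ (aSeq n) = 2 / (aSeq n) ^ 3 ∧
    f₀ (bSeq n) = 2 / (aSeq n) ^ 3 / Real.log ((n : ℝ) + 1) ∧
    f₀ (cSeq n) = 2 / (aSeq n) ^ 3) ∧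
  AffineOnIcc f₀ 0 (aSeq 1) ∧
  (∀ n : ℕ, 1 ≤ n →
    AffineOnIcc f₀ (aSeq n) (bSeq n) ∧
    AffineOnIcc f₀ (bSeq n) (cSeq n) ∧
    AffineOnIcc f₀ (cSeq n) (aSeq (n + 1)))

/-- The normalized extension `f = f₀ / ∫₀^∞ f₀(y) dy`, extended by `0` on `(-∞,0)`. -/
def normExt (f₀ : ℝ → ℝ) : ℝ → ℝ :=
  fun x => if x < 0 then 0 else f₀ x / ∫ y in Set.Ici (0:ℝ), f₀ y

/-!
On `[a_n, a_{n+1}]` the density takes values between `2 a_{n+1}⁻³` and `2 a_n⁻³`, and each of its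
three affine pieces has slope at most `K_n = 8 / (a_n³ a_{m_n})`: the drop on `[a_n, b_n]` is
spread over the length `a_{m_n} ln(n+1)²`, and the other two pieces have length at least
`a_{n+1}/4`. As `K_n` decreases, for `x ∈ [a_{j+1}, a_{j+2})` and `|t| ≤ a_j` this gives
`|f(x+t)/f(x) - 1| ≤ a_{j+2}³ K_j |t| / 2 = 4 · 2^(12j + 12 - m_j²) |t|`, which tends to `0`
because `m_j² ≥ 5 j² / 6`. The upper bound also gives `f₀(x) ≤ x⁻²`, so `f₀` is integrable and
the normalising constant is positive.
-/

open Topology NNReal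

namespace AffineOnIcc

variable {f : ℝ → ℝ} {p q : ℝ}

theorem mapsTo_of_convex (h : AffineOnIcc f p q) {s : Set ℝ} (hs : Convex ℝ s)
    (hp : f p ∈ s) (hq : f q ∈ s) : MapsTo f (Icc p q) s := by
  intro x hx
  have hpq : 0 ≤ q - p := by linarith [hx.1.trans hx.2]
  rw [h x hx]
  exact hs.add_smul_sub_mem hp hq
    ⟨div_nonneg (by linarith [hx.1]) hpq, div_le_one_of_le₀ (by linarith [hx.2]) hpq⟩

theorem lipschitzOnWith (h : AffineOnIcc f p q) {K : ℝ≥0}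
    (hK : |f q - f p| ≤ K * (q - p)) : LipschitzOnWith K f (Icc p q) := by
  refine LipschitzOnWith.of_dist_le_mul fun x hx y hy => ?_
  have hpq : 0 ≤ q - p := by linarith [hx.1.trans hx.2]
  have hslope : |f q - f p| / (q - p) ≤ K := div_le_of_le_mul₀ hpq K.2 hK
  have hxy : f x - f y = (x - y) * ((f q - f p) / (q - p)) := by
    rw [h x hx, h y hy]
    ring
  calc dist (f x) (f y) = |x - y| * (|f q - f p| / (q - p)) := by
        rw [Real.dist_eq, hxy, abs_mul, abs_div, abs_of_nonneg hpq]
    _ ≤ |x - y| * K := mul_le_mul_of_nonneg_left hslope (abs_nonneg _)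
    _ = K * dist x y := by rw [Real.dist_eq, mul_comm]

end AffineOnIcc

theorem LipschitzOnWith.Icc_trans {β : Type*} [PseudoMetricSpace β] {f : ℝ → β} {K : ℝ≥0}
    {p q r : ℝ} (h₁ : LipschitzOnWith K f (Icc p q)) (h₂ : LipschitzOnWith K f (Icc q r)) :
    LipschitzOnWith K f (Icc p r) := by
  rw [lipschitzOnWith_iff_dist_le_mul] at *
  have key : ∀ x ∈ Icc p r, ∀ y ∈ Icc p r, x ≤ y → dist (f x) (f y) ≤ K * dist x y := by
    intro x hx y hy hxy
    rcases le_total y q with hyq | hqy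
    · exact h₁ x ⟨hx.1, hxy.trans hyq⟩ y ⟨hx.1.trans hxy, hyq⟩
    rcases le_total q x with hqx | hxq
    · exact h₂ x ⟨hqx, hxy.trans hy.2⟩ y ⟨hqx.trans hxy, hy.2⟩
    calc dist (f x) (f y) ≤ dist (f x) (f q) + dist (f q) (f y) := dist_triangle _ _ _
      _ ≤ K * dist x q + K * dist q y :=
          add_le_add (h₁ x ⟨hx.1, hxq⟩ q ⟨hx.1.trans hxq, le_rfl⟩)
            (h₂ q ⟨le_rfl, hqy.trans hy.2⟩ y ⟨hqy, hy.2⟩)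
      _ = K * dist x y := by
          rw [Real.dist_eq, Real.dist_eq, Real.dist_eq, abs_of_nonpos (by linarith),
            abs_of_nonpos (by linarith), abs_of_nonpos (by linarith)]
          ring
  intro x hx y hy
  rcases le_total x y with hxy | hyx
  · exact key x hx y hy hxy
  · rw [dist_comm, dist_comm x]
    exact key y hy x hx hyx

theorem exists_mem_Ico_of_tendsto_atTop {α : Type*} [LinearOrder α] [NoMaxOrder α]
    {u : ℕ → α} (hu : Tendsto u atTop atTop) {N : ℕ} {x : α} (hx : u N ≤ x) :
    ∃ n, N ≤ n ∧ x ∈ Ico (u n) (u (n + 1)) := by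
  by_contra! h
  have hle : ∀ n, N ≤ n → u n ≤ x := by
    intro n hn
    induction n, hn using Nat.le_induction with
    | base => exact hx
    | succ n hn ih => exact not_lt.1 fun hlt => h n hn ⟨ih, hlt⟩
  obtain ⟨n, hxn, hn⟩ := ((hu.eventually_gt_atTop x).and (eventually_ge_atTop N)).exists
  exact (hle n hn).not_gt hxn

theorem natCast_add_one_le_two_pow (n : ℕ) : (n : ℝ) + 1 ≤ 2 ^ n := by
  simpa [add_comm, one_add_one_eq_two] using one_add_mul_le_pow (a := (1 : ℝ)) (by norm_num) n

theorem one_le_log_natCast_add_one {n : ℕ} (hn : 2 ≤ n) : 1 ≤ Real.log ((n : ℝ) + 1) := by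
  rw [Real.le_log_iff_exp_le (by positivity)]
  have : (2 : ℝ) ≤ n := by exact_mod_cast hn
  linarith [Real.exp_one_lt_three]

theorem log_natCast_add_one_le (n : ℕ) : Real.log ((n : ℝ) + 1) ≤ n := by
  linarith [Real.log_le_sub_one_of_pos (by positivity : (0 : ℝ) < n + 1)]

theorem aSeq_pos (n : ℕ) : 0 < aSeq n := by
  unfold aSeq; positivity

theorem aSeq_mono : Monotone aSeq := fun _ _ h =>
  pow_le_pow_right₀ one_le_two (Nat.pow_le_pow_left h 2)

theorem aSeq_succ (n : ℕ) : aSeq (n + 1) = aSeq n * 2 ^ (2 * n + 1) := by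
  unfold aSeq
  rw [← pow_add]
  ring_nf

theorem two_mul_aSeq_le_aSeq_succ (n : ℕ) : 2 * aSeq n ≤ aSeq (n + 1) := by
  rw [aSeq_succ, mul_comm]
  exact mul_le_mul_of_nonneg_left (le_self_pow₀ one_le_two (by omega)) (aSeq_pos n).le

theorem natCast_le_aSeq (n : ℕ) : (n : ℝ) ≤ aSeq n :=
  calc (n : ℝ) ≤ 2 ^ n := by linarith [natCast_add_one_le_two_pow n]
    _ ≤ aSeq n := pow_le_pow_right₀ one_le_two (Nat.le_self_pow two_ne_zero n)

theorem tendsto_aSeq_atTop : Tendsto aSeq atTop atTop :=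
  tendsto_atTop_mono natCast_le_aSeq tendsto_natCast_atTop_atTop

theorem mIdx_le_self {n : ℕ} (hn : 1 ≤ n) : mIdx n ≤ n := by
  refine max_le hn (Nat.ceil_le.2 ?_)
  have : Real.sqrt 5 / Real.sqrt 6 ≤ 1 :=
    div_le_one_of_le₀ (Real.sqrt_le_sqrt (by norm_num)) (Real.sqrt_nonneg _)
  nlinarith [Nat.cast_nonneg (α := ℝ) n]

theorem mIdx_mono : Monotone mIdx := fun m n h =>
  max_le_max le_rfl (Nat.ceil_mono (mul_le_mul_of_nonneg_left (by exact_mod_cast h)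
    (div_nonneg (Real.sqrt_nonneg _) (Real.sqrt_nonneg _))))

theorem five_mul_sq_le_six_mul_mIdx_sq (n : ℕ) : 5 * n ^ 2 ≤ 6 * mIdx n ^ 2 := by
  have hceil : Real.sqrt 5 / Real.sqrt 6 * n ≤ mIdx n :=
    (Nat.le_ceil _).trans (by exact_mod_cast le_max_right _ _)
  have hsq : (Real.sqrt 5 / Real.sqrt 6 * n) ^ 2 = 5 / 6 * n ^ 2 := by
    rw [mul_pow, div_pow, Real.sq_sqrt (by norm_num), Real.sq_sqrt (by norm_num)]
  have : (5 : ℝ) * n ^ 2 ≤ 6 * mIdx n ^ 2 := by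
    nlinarith [pow_le_pow_left₀ (by positivity) hceil 2]
  exact_mod_cast this

theorem bSeq_le_aSeq_succ_div_two {n : ℕ} (hn : 1 ≤ n) : bSeq n ≤ aSeq (n + 1) / 2 := by
  have hL : Real.log ((n : ℝ) + 1) ^ 2 ≤ (n : ℝ) ^ 2 :=
    pow_le_pow_left₀ (Real.log_nonneg (by linarith [n.cast_nonneg (α := ℝ)]))
      (log_natCast_add_one_le n) 2
  have hpow : ((n : ℝ) + 1) ^ 2 ≤ (2 ^ n) ^ 2 :=
    pow_le_pow_left₀ (by positivity) (natCast_add_one_le_two_pow n) 2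
  have ha := aSeq_pos n
  calc bSeq n ≤ aSeq n * (1 + n ^ 2) := by
        unfold bSeq
        nlinarith [aSeq_mono (mIdx_le_self hn), aSeq_pos (mIdx n)]
    _ ≤ aSeq n * (2 ^ n) ^ 2 := by gcongr; nlinarith [n.cast_nonneg (α := ℝ)]
    _ = aSeq (n + 1) / 2 := by rw [aSeq_succ, ← pow_mul, pow_succ]; ring

theorem aSeq_succ_div_four_le_cSeq_sub_bSeq {n : ℕ} (hn : 1 ≤ n) :
    aSeq (n + 1) / 4 ≤ cSeq n - bSeq n := by
  unfold cSeq; linarith [bSeq_le_aSeq_succ_div_two hn]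

theorem aSeq_succ_div_four_le_aSeq_succ_sub_cSeq {n : ℕ} (hn : 1 ≤ n) :
    aSeq (n + 1) / 4 ≤ aSeq (n + 1) - cSeq n := by
  unfold cSeq; linarith [bSeq_le_aSeq_succ_div_two hn]

def blockLip (n : ℕ) : ℝ≥0 :=
  ⟨8 / (aSeq n ^ 3 * aSeq (mIdx n)), by have := aSeq_pos n; have := aSeq_pos (mIdx n); positivity⟩

theorem coe_blockLip (n : ℕ) : (blockLip n : ℝ) = 8 / (aSeq n ^ 3 * aSeq (mIdx n)) := rfl

theorem blockLip_antitone : Antitone blockLip := fun m n h => by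
  rw [← NNReal.coe_le_coe, coe_blockLip, coe_blockLip]
  have hm := aSeq_pos m
  have hmm := aSeq_pos (mIdx m)
  exact div_le_div_of_nonneg_left (by norm_num) (by positivity)
    (mul_le_mul (pow_le_pow_left₀ hm.le (aSeq_mono h) 3) (aSeq_mono (mIdx_mono h)) hmm.le
      (pow_nonneg (aSeq_pos n).le 3))

theorem aSeq_cube_mul_blockLip_le {j : ℕ} (hj : 20 ≤ j) :
    aSeq (j + 2) ^ 3 * blockLip j ≤ 8 * (1 / 2) ^ j := by
  have hexp : 3 * (j + 2) ^ 2 + j ≤ 3 * j ^ 2 + mIdx j ^ 2 := by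
    nlinarith [five_mul_sq_le_six_mul_mIdx_sq j]
  have hpow : aSeq (j + 2) ^ 3 * 2 ^ j ≤ aSeq j ^ 3 * aSeq (mIdx j) := by
    unfold aSeq
    rw [← pow_mul, ← pow_mul, ← pow_add, ← pow_add]
    exact pow_le_pow_right₀ one_le_two (by linarith)
  have hj := aSeq_pos j
  have hm := aSeq_pos (mIdx j)
  rw [coe_blockLip, one_div_pow]
  field_simp
  linarith

def blockRange (n : ℕ) : Set ℝ := Icc (2 / aSeq (n + 1) ^ 3) (2 / aSeq n ^ 3)

namespace PWConstruction

variable {f₀ : ℝ → ℝ} {n : ℕ}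

theorem nodes_mem_blockRange (hf₀ : PWConstruction f₀) (hn : 2 ≤ n) :
    f₀ (aSeq n) ∈ blockRange n ∧ f₀ (bSeq n) ∈ blockRange n ∧ f₀ (cSeq n) ∈ blockRange n ∧
      f₀ (aSeq (n + 1)) ∈ blockRange n := by
  obtain ⟨-, -, -, hval, -⟩ := hf₀
  obtain ⟨ha, hb, hc⟩ := hval n (by omega)
  have ha' := (hval (n + 1) (by omega)).1
  have hpos := aSeq_pos n
  have hL := one_le_log_natCast_add_one hn
  set L := Real.log ((n : ℝ) + 1)
  have hsucc : aSeq n ≤ aSeq (n + 1) := aSeq_mono n.le_succ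
  have hcube : aSeq n ^ 3 * L ≤ aSeq (n + 1) ^ 3 := by
    have hgrowth : L ≤ (2 ^ (2 * n + 1)) ^ 3 :=
      calc L ≤ n + 1 := by linarith [log_natCast_add_one_le n]
        _ ≤ 2 ^ n := natCast_add_one_le_two_pow n
        _ ≤ (2 ^ (2 * n + 1)) ^ 3 := by
          rw [← pow_mul]; exact pow_le_pow_right₀ one_le_two (by omega)
    rw [aSeq_succ, mul_pow]
    gcongr
  have hv : 2 / aSeq (n + 1) ^ 3 ≤ 2 / aSeq n ^ 3 := by gcongr
  have hvL : 2 / aSeq n ^ 3 / L ∈ blockRange n := by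
    constructor
    · rw [div_div]; gcongr
    · exact div_le_self (by positivity) hL
  unfold blockRange
  rw [ha, hb, hc, ha']
  exact ⟨⟨hv, le_rfl⟩, hvL, ⟨hv, le_rfl⟩, ⟨le_rfl, hv⟩⟩

theorem mapsTo_block (hf₀ : PWConstruction f₀) (hn : 2 ≤ n) :
    MapsTo f₀ (Icc (aSeq n) (aSeq (n + 1))) (blockRange n) := by
  obtain ⟨ha, hb, hc, ha'⟩ := hf₀.nodes_mem_blockRange hn
  obtain ⟨-, -, -, -, -, haff⟩ := hf₀
  obtain ⟨h₁, h₂, h₃⟩ := haff n (by omega)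
  have hconv : Convex ℝ (blockRange n) := convex_Icc _ _
  exact (((h₁.mapsTo_of_convex hconv ha hb).union (h₂.mapsTo_of_convex hconv hb hc)).mono_left
    Icc_subset_Icc_union_Icc |>.union (h₃.mapsTo_of_convex hconv hc ha')).mono_left
    Icc_subset_Icc_union_Icc

theorem lipschitzOnWith_block (hf₀ : PWConstruction f₀) (hn : 2 ≤ n) :
    LipschitzOnWith (blockLip n) f₀ (Icc (aSeq n) (aSeq (n + 1))) := by
  obtain ⟨ha, hb, hc, ha'⟩ := hf₀.nodes_mem_blockRange hn
  obtain ⟨-, -, -, -, -, haff⟩ := hf₀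
  obtain ⟨h₁, h₂, h₃⟩ := haff n (by omega)
  have hpos := aSeq_pos n
  have hm := aSeq_pos (mIdx n)
  have hjump : ∀ y ∈ blockRange n, ∀ z ∈ blockRange n, |z - y| ≤ 2 / aSeq n ^ 3 := by
    have hlow : 0 ≤ 2 / aSeq (n + 1) ^ 3 := div_nonneg zero_le_two (pow_nonneg (aSeq_pos _).le 3)
    exact fun y hy z hz => abs_sub_le_of_nonneg_of_le (hlow.trans hz.1) hz.2 (hlow.trans hy.1) hy.2
  have hshort : 2 / aSeq n ^ 3 ≤ blockLip n * (bSeq n - aSeq n) := by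
    have hL := one_le_log_natCast_add_one hn
    have hlen : bSeq n - aSeq n = aSeq (mIdx n) * Real.log ((n : ℝ) + 1) ^ 2 := by
      unfold bSeq; ring
    have hK : blockLip n * (bSeq n - aSeq n) = 8 * Real.log ((n : ℝ) + 1) ^ 2 / aSeq n ^ 3 := by
      rw [coe_blockLip, hlen]; field_simp
    rw [hK]
    gcongr
    nlinarith
  have hlong : ∀ len, aSeq (n + 1) / 4 ≤ len → 2 / aSeq n ^ 3 ≤ blockLip n * len := by
    intro len hlen
    have hm' : aSeq (mIdx n) ≤ aSeq (n + 1) := aSeq_mono ((mIdx_le_self (by omega)).trans n.le_succ)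
    calc 2 / aSeq n ^ 3 ≤ 2 / aSeq n ^ 3 * (aSeq (n + 1) / aSeq (mIdx n)) :=
          le_mul_of_one_le_right (by positivity) ((one_le_div hm).2 hm')
      _ = blockLip n * (aSeq (n + 1) / 4) := by rw [coe_blockLip]; field_simp; ring
      _ ≤ blockLip n * len := by gcongr
  exact ((h₁.lipschitzOnWith ((hjump _ ha _ hb).trans hshort)).Icc_trans
    (h₂.lipschitzOnWith ((hjump _ hb _ hc).trans
      (hlong _ (aSeq_succ_div_four_le_cSeq_sub_bSeq (by omega)))))).Icc_trans
    (h₃.lipschitzOnWith ((hjump _ hc _ ha').trans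
      (hlong _ (aSeq_succ_div_four_le_aSeq_succ_sub_cSeq (by omega)))))

theorem lipschitzOnWith_three_blocks (hf₀ : PWConstruction f₀) (hn : 2 ≤ n) :
    LipschitzOnWith (blockLip n) f₀ (Icc (aSeq n) (aSeq (n + 3))) :=
  ((hf₀.lipschitzOnWith_block hn).Icc_trans
    ((hf₀.lipschitzOnWith_block (by omega)).weaken (blockLip_antitone (by omega)))).Icc_trans
    ((hf₀.lipschitzOnWith_block (by omega)).weaken (blockLip_antitone (by omega)))

theorem abs_div_sub_one_le (hf₀ : PWConstruction f₀) (hn : 2 ≤ n) {x t : ℝ}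
    (hx : x ∈ Ico (aSeq (n + 1)) (aSeq (n + 2))) (ht : |t| ≤ aSeq n) :
    |f₀ (x + t) / f₀ x - 1| ≤ aSeq (n + 2) ^ 3 * blockLip n / 2 * |t| := by
  have hxI : x ∈ Icc (aSeq n) (aSeq (n + 3)) :=
    ⟨(aSeq_mono n.le_succ).trans hx.1, hx.2.le.trans (aSeq_mono (by omega))⟩
  have hxtI : x + t ∈ Icc (aSeq n) (aSeq (n + 3)) := by
    have := two_mul_aSeq_le_aSeq_succ n
    have := two_mul_aSeq_le_aSeq_succ (n + 2)
    have := aSeq_mono (show n ≤ n + 2 by omega)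
    constructor <;> linarith [neg_abs_le t, le_abs_self t, hx.1, hx.2]
  have hlow : 2 / aSeq (n + 2) ^ 3 ≤ f₀ x :=
    (hf₀.mapsTo_block (n := n + 1) (by omega) (Ico_subset_Icc_self hx)).1
  have hpos := aSeq_pos (n + 2)
  have hfx : 0 < f₀ x := (by positivity : (0 : ℝ) < 2 / aSeq (n + 2) ^ 3).trans_le hlow
  have hdiff : |f₀ (x + t) - f₀ x| ≤ blockLip n * |t| := by
    simpa [Real.dist_eq] using (hf₀.lipschitzOnWith_three_blocks hn).dist_le_mul _ hxtI _ hxI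
  calc |f₀ (x + t) / f₀ x - 1| = |f₀ (x + t) - f₀ x| / f₀ x := by
        rw [div_sub_one hfx.ne', abs_div, abs_of_pos hfx]
    _ ≤ blockLip n * |t| / (2 / aSeq (n + 2) ^ 3) :=
        div_le_div₀ (by positivity) hdiff (by positivity) hlow
    _ = aSeq (n + 2) ^ 3 * blockLip n / 2 * |t| := by field_simp

theorem tendsto_div_comp_add (hf₀ : PWConstruction f₀) (t : ℝ) :
    Tendsto (fun x => f₀ (x + t) / f₀ x) atTop (𝓝 1) := by
  have hsmall : Tendsto (fun j : ℕ => 4 * (1 / 2 : ℝ) ^ j * |t|) atTop (𝓝 0) := by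
    simpa using ((tendsto_pow_atTop_nhds_zero_of_lt_one (by norm_num : (0 : ℝ) ≤ 1 / 2)
      (by norm_num)).const_mul 4).mul_const |t|
  rw [Metric.tendsto_atTop]
  intro ε hε
  obtain ⟨N, hN⟩ := eventually_atTop.1 (hsmall.eventually (gt_mem_nhds hε))
  refine ⟨aSeq (max N (max 20 ⌈|t|⌉₊) + 1), fun x hx => ?_⟩
  obtain ⟨k, hk, hxk⟩ := exists_mem_Ico_of_tendsto_atTop tendsto_aSeq_atTop hx
  obtain ⟨j, rfl⟩ : ∃ j, k = j + 1 := ⟨k - 1, by omega⟩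
  have ht : |t| ≤ aSeq j :=
    (Nat.le_ceil _).trans ((Nat.cast_le.2 (by omega)).trans (natCast_le_aSeq j))
  rw [Real.dist_eq]
  calc |f₀ (x + t) / f₀ x - 1| ≤ aSeq (j + 2) ^ 3 * blockLip j / 2 * |t| :=
        hf₀.abs_div_sub_one_le (by omega) hxk ht
    _ ≤ 4 * (1 / 2) ^ j * |t| := by
        gcongr
        linarith [aSeq_cube_mul_blockLip_le (j := j) (by omega)]
    _ < ε := hN j (by omega)

theorem le_rpow_neg_two (hf₀ : PWConstruction f₀) {x : ℝ} (hx : aSeq 5 ≤ x) :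
    f₀ x ≤ x ^ (-2 : ℝ) := by
  obtain ⟨n, hn, hxn⟩ := exists_mem_Ico_of_tendsto_atTop tendsto_aSeq_atTop hx
  have hx0 : 0 < x := (aSeq_pos 5).trans_le hx
  have hpos := aSeq_pos n
  have hpos' := aSeq_pos (n + 1)
  have hexp : 2 * aSeq (n + 1) ^ 2 ≤ aSeq n ^ 3 := by
    unfold aSeq
    rw [← pow_mul, ← pow_mul, ← pow_succ']
    exact pow_le_pow_right₀ one_le_two (by nlinarith)
  calc f₀ x ≤ 2 / aSeq n ^ 3 := (hf₀.mapsTo_block (by omega) (Ico_subset_Icc_self hxn)).2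
    _ ≤ 1 / aSeq (n + 1) ^ 2 := by rw [div_le_div_iff₀ (by positivity) (by positivity)]; linarith
    _ ≤ 1 / x ^ 2 := by gcongr; exact hxn.2.le
    _ = x ^ (-2 : ℝ) := by rw [Real.rpow_neg hx0.le, Real.rpow_two, one_div]

theorem integrableOn_Ici (hf₀ : PWConstruction f₀) : IntegrableOn f₀ (Ici 0) := by
  have ha := aSeq_pos 5
  have hbound : ∀ x, aSeq 5 ≤ x → f₀ x ≤ x ^ (-2 : ℝ) := fun _ hx => hf₀.le_rpow_neg_two hx
  obtain ⟨hcont, hpos, -⟩ := hf₀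
  have hhead : IntegrableOn f₀ (Icc 0 (aSeq 5)) :=
    (hcont.mono Icc_subset_Ici_self).integrableOn_Icc
  have htail : IntegrableOn f₀ (Ioi (aSeq 5)) := by
    refine (integrableOn_Ioi_rpow_of_lt (a := -2) (by norm_num) ha).mono'
      ((hcont.mono fun y hy => ha.le.trans (le_of_lt hy)).aestronglyMeasurable measurableSet_Ioi) ?_
    refine (ae_restrict_iff' measurableSet_Ioi).2 (ae_of_all _ fun x hx => ?_)
    rw [Real.norm_of_nonneg (hpos x (ha.le.trans hx.le)).le]
    exact hbound x hx.le
  exact (hhead.union htail).mono_set (Icc_union_Ioi_eq_Ici ha.le).ge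

theorem integral_pos (hf₀ : PWConstruction f₀) : 0 < ∫ y in Ici (0 : ℝ), f₀ y := by
  have hint := hf₀.integrableOn_Ici
  obtain ⟨-, hpos, -⟩ := hf₀
  have hsupp : Function.support f₀ ∩ Ici 0 = Ici 0 := inter_eq_right.2 fun y hy => (hpos y hy).ne'
  rw [setIntegral_pos_iff_support_of_nonneg_ae
    ((ae_restrict_iff' measurableSet_Ici).2 (ae_of_all _ fun y hy => (hpos y hy).le))
    hint, hsupp, Real.volume_Ici]
  exact ENNReal.zero_lt_top

end PWConstruction

theorem normExt_of_nonneg {f₀ : ℝ → ℝ} {x : ℝ} (hx : 0 ≤ x) :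
    normExt f₀ x = f₀ x / ∫ y in Ici (0 : ℝ), f₀ y :=
  if_neg (not_lt.2 hx)

theorem pw_density_long_tailed (f₀ : ℝ → ℝ) (hf₀ : PWConstruction f₀) :
    (∀ x : ℝ, 0 ≤ x → 0 < normExt f₀ x) ∧
    ∀ t : ℝ, Tendsto (fun x => normExt f₀ (x + t) / normExt f₀ x) atTop (nhds 1) := by
  have hI := hf₀.integral_pos
  refine ⟨fun x hx => ?_, fun t => (hf₀.tendsto_div_comp_add t).congr' ?_⟩
  · rw [normExt_of_nonneg hx]
    exact div_pos (hf₀.2.1 x hx) hI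
  · filter_upwards [eventually_ge_atTop 0, eventually_ge_atTop (-t)] with x hx hxt
    rw [normExt_of_nonneg hx, normExt_of_nonneg (by linarith), div_div_div_cancel_right₀ hI.ne']
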